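/- arXiv:2506.18099 — 2 statements merged into one kernel-verified Lean document; each statement's English description precedes it below -/
import Mathlib

section
/- Consider the slow-fast family ẋ = f(x,y,ε), ẏ = ε g(x,y,ε) arising from a linear regularization: f = (X₁+Y₁)/2 + φ(x)(X₁-Y₁)/2 and g = (X₂+Y₂)/2 + φ(x)(X₂-Y₂)/2, where the Xᵢ, Yᵢ are evaluated at (εx, y) and φ is a C¹ function. Then this system cannot have a slow-fast Hopf point at the origin; i.e., the conditions f(0,0,0) = g(0,0,0) = ∂f/∂x(0,0,0) = 0, ∂²f/∂x²(0,0,0) ≠ 0, and (∂g/∂x)(0,0,0)·(∂f/∂y)(0,0,0) < 0 cannot hold simultaneously, provided (X₁ - Y₁)(0,0) ≠ 0. -/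
/-- A linear regularization of a piecewise smooth system cannot produce a slow-fast
Hopf point at the origin, provided (X₁ - Y₁)(0,0) ≠ 0. -/
theorem stmt5 (X₁ X₂ Y₁ Y₂ : ℝ × ℝ → ℝ) (φ : ℝ → ℝ)
    (hX₁ : ContDiff ℝ (⊤ : ℕ∞) X₁) (hX₂ : ContDiff ℝ (⊤ : ℕ∞) X₂)
    (hY₁ : ContDiff ℝ (⊤ : ℕ∞) Y₁) (hY₂ : ContDiff ℝ (⊤ : ℕ∞) Y₂)
    (hφ : ContDiff ℝ 1 φ)
    (hne : X₁ (0, 0) - Y₁ (0, 0) ≠ 0) :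
    ¬ (let f : ℝ → ℝ → ℝ → ℝ := fun x y ε =>
          (X₁ (ε * x, y) + Y₁ (ε * x, y)) / 2 +
            φ x * ((X₁ (ε * x, y) - Y₁ (ε * x, y)) / 2)
       let g : ℝ → ℝ → ℝ → ℝ := fun x y ε =>
          (X₂ (ε * x, y) + Y₂ (ε * x, y)) / 2 +
            φ x * ((X₂ (ε * x, y) - Y₂ (ε * x, y)) / 2)
       f 0 0 0 = 0 ∧ g 0 0 0 = 0 ∧
       deriv (fun x => f x 0 0) 0 = 0 ∧
       iteratedDeriv 2 (fun x => f x 0 0) 0 ≠ 0 ∧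
       deriv (fun x => g x 0 0) 0 * deriv (fun y => f 0 y 0) 0 < 0) := by
  intro h
  obtain ⟨h1, h2, h3, h4, h5⟩ := h
  have hd : DifferentiableAt ℝ φ 0 :=
    (hφ.differentiable one_ne_zero).differentiableAt
  have key : ∀ A B : ℝ,
      deriv (fun x => (A + B) / 2 + φ x * ((A - B) / 2)) 0
        = deriv φ 0 * ((A - B) / 2) := by
    intro A B
    rw [deriv_const_add]
    exact deriv_mul_const hd _
  simp only [zero_mul] at h3 h5
  rw [key] at h3
  have hφ0 : deriv φ 0 = 0 := by
    rcases mul_eq_zero.mp h3 with h | h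
    · exact h
    · exact absurd (by linarith [div_eq_zero_iff.mp h]) hne
  rw [key, hφ0, zero_mul, zero_mul] at h5
  exact lt_irrefl 0 h5
end

section
/- Let φ̃(x) = x + δφ_e(x) with φ_e an even polynomial, φ_e(0)=0, and let L(x) = -x + L₁(x)δ + O(δ²) with L₁(x) = -2φ_e(x) be defined by φ̃(L(x)) = -φ̃(x). Then the integral I(x)/4 = ∫ₓ^{L(x)} φ̃(s)(φ̃'(s))² ds satisfies I(x)/4 = -2δ∫₀ˣ s·φ_e'(s) ds + O(δ²) as δ → 0, uniformly for x in a compact subinterval of (0,1). -/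
/-!
Write φ̃ = id + δ φₑ. Since φ̃ φ̃' is the derivative of φ̃²/2 and φ̃(L) = -φ̃(x), the integral
∫ₓ^L φ̃ φ̃'² equals ∫ₓ^L φ̃ φ̃' (φ̃' - 1) = δ ∫ₓ^L φ̃ φ̃' φₑ'. Up to O(δ) the integrand is
s φₑ'(s), which is even, so its integral over [x, -x] is -2 ∫₀ˣ s φₑ'; the rest of the range,
[-x, L], has length O(δ) because L = -x + O(δ).
-/

open Set intervalIntegral

theorem integral_mul_deriv_sq_eq_of_apply_eq_neg {ψ : ℝ → ℝ} (hψ : ContDiff ℝ 1 ψ) {u v : ℝ}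
    (huv : ψ v = -ψ u) :
    ∫ s in u..v, ψ s * deriv ψ s ^ 2 = ∫ s in u..v, ψ s * deriv ψ s * (deriv ψ s - 1) := by
  have hψ' := hψ.continuous_deriv_one
  have hexact : ∫ s in u..v, ψ s * deriv ψ s = 0 := by
    have hderiv : ∀ s ∈ uIcc u v, HasDerivAt (fun t => ψ t * ψ t / 2) (ψ s * deriv ψ s) s := by
      intro s _
      have h := (hψ.differentiable one_ne_zero s).hasDerivAt
      exact ((h.fun_mul h).div_const 2).congr_deriv (by ring)
    rw [integral_eq_sub_of_hasDerivAt hderiv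
      ((hψ.continuous.mul hψ').intervalIntegrable u v), huv]
    ring
  calc ∫ s in u..v, ψ s * deriv ψ s ^ 2
      = (∫ s in u..v, ψ s * deriv ψ s ^ 2) - ∫ s in u..v, ψ s * deriv ψ s := by
        rw [hexact, sub_zero]
    _ = ∫ s in u..v, ψ s * deriv ψ s * (deriv ψ s - 1) := by
        rw [← integral_sub (f := fun s => ψ s * deriv ψ s ^ 2) (g := fun s => ψ s * deriv ψ s)
          ((hψ.continuous.mul (hψ'.pow 2)).intervalIntegrable u v)
          ((hψ.continuous.mul hψ').intervalIntegrable u v)]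
        congr 1 with s
        ring

theorem Function.Even.integral_neg_self {g : ℝ → ℝ} (hg : Function.Even g) (hgc : Continuous g)
    (x : ℝ) : ∫ s in x..-x, g s = -2 * ∫ s in (0 : ℝ)..x, g s := by
  have hreflect : ∫ s in -x..0, g s = ∫ s in (0 : ℝ)..x, g s := by
    simpa [hg _] using (integral_comp_neg (a := 0) (b := x) g).symm
  rw [integral_symm, ← integral_add_adjacent_intervals (hgc.intervalIntegrable (-x) 0)
    (hgc.intervalIntegrable 0 x), hreflect]
  ring

theorem Function.Even.odd_deriv {φ : ℝ → ℝ} (hφ : Function.Even φ) : Function.Odd (deriv φ) := by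
  intro s
  have h := deriv_comp_neg (f := φ) (x := -s)
  simp only [neg_neg] at h
  rwa [show (fun x => φ (-x)) = φ from funext hφ] at h

theorem integral_transition_sub_eq {φ : ℝ → ℝ} (hφ : ContDiff ℝ 1 φ) (heven : Function.Even φ)
    {δ x y : ℝ} (hy : y + δ * φ y = -(x + δ * φ x)) :
    (∫ s in x..y, (s + δ * φ s) * (deriv (fun u => u + δ * φ u) s) ^ 2) -
        (-2 * δ * ∫ s in (0 : ℝ)..x, s * deriv φ s) =
      δ * ((∫ s in -x..y, (s + δ * φ s) * (1 + δ * deriv φ s) * deriv φ s) +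
        δ * ∫ s in x..-x, (φ s + s * deriv φ s + δ * φ s * deriv φ s) * deriv φ s) := by
  have hφc := hφ.continuous
  have hφ' := hφ.continuous_deriv_one
  have hψ : ContDiff ℝ 1 fun u => u + δ * φ u := contDiff_id.add (contDiff_const.mul hφ)
  have hderiv : ∀ s, deriv (fun u => u + δ * φ u) s = 1 + δ * deriv φ s := fun s =>
    ((hasDerivAt_id s).add ((hφ.differentiable one_ne_zero s).hasDerivAt.const_mul δ)).deriv
  have hsymm : ∫ s in x..-x, s * deriv φ s = -2 * ∫ s in (0 : ℝ)..x, s * deriv φ s :=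
    Function.Even.integral_neg_self (fun s => by simp [heven.odd_deriv s]) (by fun_prop) x
  have hP : Continuous fun s => (s + δ * φ s) * (1 + δ * deriv φ s) * deriv φ s := by fun_prop
  have hexpand : ∫ s in x..-x, (s + δ * φ s) * (1 + δ * deriv φ s) * deriv φ s =
      (∫ s in x..-x, s * deriv φ s) +
        δ * ∫ s in x..-x, (φ s + s * deriv φ s + δ * φ s * deriv φ s) * deriv φ s := by
    rw [← integral_const_mul, ← integral_add (Continuous.intervalIntegrable (by fun_prop) _ _)
      (Continuous.intervalIntegrable (by fun_prop) _ _)]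
    congr 1 with s
    ring
  rw [integral_mul_deriv_sq_eq_of_apply_eq_neg hψ hy]
  simp only [hderiv, add_sub_cancel_left]
  rw [show (∫ s in x..y, (s + δ * φ s) * (1 + δ * deriv φ s) * (δ * deriv φ s)) =
      δ * ∫ s in x..y, (s + δ * φ s) * (1 + δ * deriv φ s) * deriv φ s by
    rw [← integral_const_mul]; congr 1 with s; ring]
  rw [← integral_add_adjacent_intervals (hP.intervalIntegrable x (-x))
    (hP.intervalIntegrable (-x) y), hexpand, hsymm]
  ring

theorem exists_abs_add_le_mul_of_abs_sub_le {g : ℝ → ℝ} {a b δ₁ C : ℝ}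
    (hg : ContinuousOn g (Icc a b)) (hδ₁ : 0 ≤ δ₁) (hC : 0 ≤ C) {L : ℝ → ℝ → ℝ}
    (hL : ∀ δ ∈ Icc 0 δ₁, ∀ x ∈ Icc a b, |L δ x - (-x + g x * δ)| ≤ C * δ ^ 2) :
    ∃ c ≥ 0, ∀ δ ∈ Icc 0 δ₁, ∀ x ∈ Icc a b, |L δ x + x| ≤ c * δ := by
  obtain ⟨M, hM⟩ := isCompact_Icc.exists_bound_of_continuousOn hg
  refine ⟨max M 0 + C * δ₁, by positivity, fun δ hδ x hx => ?_⟩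
  have hgx : |g x| ≤ max M 0 := (hM x hx).trans (le_max_left _ _)
  calc |L δ x + x| = |(L δ x - (-x + g x * δ)) + g x * δ| := by ring_nf
    _ ≤ C * δ ^ 2 + max M 0 * δ := by
      refine (abs_add_le _ _).trans (add_le_add (hL δ hδ x hx) ?_)
      rw [abs_mul, abs_of_nonneg hδ.1]
      exact mul_le_mul_of_nonneg_right hgx hδ.1
    _ ≤ (max M 0 + C * δ₁) * δ := by
      nlinarith [mul_le_mul_of_nonneg_left (mul_le_mul_of_nonneg_right hδ.2 hδ.1) hC]

theorem exists_abs_le_of_continuous_uncurry {F : ℝ → ℝ → ℝ}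
    (hF : Continuous (Function.uncurry F)) (a b c d : ℝ) :
    ∃ M ≥ 0, ∀ δ ∈ Icc a b, ∀ s ∈ Icc c d, |F δ s| ≤ M := by
  obtain ⟨M, hM⟩ := (isCompact_Icc.prod isCompact_Icc).exists_bound_of_continuousOn hF.continuousOn
  exact ⟨max M 0, le_max_right _ _, fun δ hδ s hs =>
    (hM (δ, s) ⟨hδ, hs⟩).trans (le_max_left _ _)⟩

theorem abs_integral_le_of_abs_le {f : ℝ → ℝ} {u v R M : ℝ} (hu : |u| ≤ R) (hv : |v| ≤ R)
    (hf : ∀ s ∈ Icc (-R) R, |f s| ≤ M) : |∫ s in u..v, f s| ≤ M * |v - u| := by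
  simpa only [Real.norm_eq_abs] using norm_integral_le_of_norm_le_const fun s hs =>
    (Real.norm_eq_abs (f s)).trans_le
      (hf s (uIcc_subset_Icc (abs_le.1 hu) (abs_le.1 hv) (uIoc_subset_uIcc hs)))

theorem abs_integral_transition_sub_le {φ : ℝ → ℝ} (hφ : ContDiff ℝ 1 φ)
    (heven : Function.Even φ) {δ x y R MP MQ : ℝ} (hδ : 0 ≤ δ) (hx : |x| ≤ R) (hy : |y| ≤ R)
    (hxy : y + δ * φ y = -(x + δ * φ x))
    (hP : ∀ s ∈ Icc (-R) R, |(s + δ * φ s) * (1 + δ * deriv φ s) * deriv φ s| ≤ MP)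
    (hQ : ∀ s ∈ Icc (-R) R, |(φ s + s * deriv φ s + δ * φ s * deriv φ s) * deriv φ s| ≤ MQ) :
    |(∫ s in x..y, (s + δ * φ s) * (deriv (fun u => u + δ * φ u) s) ^ 2) -
        (-2 * δ * ∫ s in (0 : ℝ)..x, s * deriv φ s)| ≤
      δ * (MP * |y + x| + δ * MQ * (2 * |x|)) := by
  have hnegx : |-x| ≤ R := by rwa [abs_neg]
  have hA := abs_integral_le_of_abs_le hnegx hy hP
  have hB := abs_integral_le_of_abs_le hx hnegx hQ
  rw [sub_neg_eq_add] at hA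
  rw [show -x - x = -(2 * x) by ring, abs_neg, abs_mul, abs_two] at hB
  rw [integral_transition_sub_eq hφ heven hxy, abs_mul, abs_of_nonneg hδ, mul_assoc δ MQ]
  gcongr
  refine (abs_add_le _ _).trans (add_le_add hA ?_)
  rw [abs_mul, abs_of_nonneg hδ]
  gcongr

theorem stmt11_general (φₑ : ℝ → ℝ) (p : Polynomial ℝ)
    (hp : ∀ x : ℝ, φₑ x = p.eval x)
    (heven : ∀ x : ℝ, φₑ (-x) = φₑ x)
    (L : ℝ → ℝ → ℝ) (a b : ℝ)
    (δ₁ : ℝ) (hδ₁ : 0 < δ₁)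
    (hLdef : ∀ δ ∈ Set.Icc (0 : ℝ) δ₁, ∀ x ∈ Set.Icc a b,
      L δ x < 0 ∧ (L δ x + δ * φₑ (L δ x)) = -(x + δ * φₑ x))
    (hLexp : ∃ C > (0 : ℝ), ∀ δ ∈ Set.Icc (0 : ℝ) δ₁, ∀ x ∈ Set.Icc a b,
      |L δ x - (-x + (-2 * φₑ x) * δ)| ≤ C * δ ^ 2) :
    ∃ C > (0 : ℝ), ∃ δ₀ > (0 : ℝ), δ₀ ≤ δ₁ ∧
      ∀ δ ∈ Set.Icc (0 : ℝ) δ₀, ∀ x ∈ Set.Icc a b,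
        |(∫ s in x..(L δ x),
            (s + δ * φₑ s) * (deriv (fun u => u + δ * φₑ u) s) ^ 2) -
          (-2 * δ * ∫ s in (0:ℝ)..x, s * deriv φₑ s)| ≤ C * δ ^ 2 := by
  obtain ⟨C, hC, hLexp⟩ := hLexp
  have hφ : ContDiff ℝ 1 φₑ := by
    rw [funext hp]
    simpa using p.contDiff_aeval (𝕜 := ℝ) 1
  have hφc := hφ.continuous
  have hD := hφ.continuous_deriv_one
  obtain ⟨c, hc, hLx⟩ := exists_abs_add_le_mul_of_abs_sub_le (g := fun x => -2 * φₑ x)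
    (by fun_prop) hδ₁.le hC.le hLexp
  obtain ⟨R, hR, hxR, hLR⟩ : ∃ R ≥ 0, (∀ x ∈ Icc a b, |x| ≤ R) ∧
      ∀ δ ∈ Icc 0 δ₁, ∀ x ∈ Icc a b, |L δ x| ≤ R := by
    refine ⟨max |a| |b| + c * δ₁, by positivity, fun x hx => ?_, fun δ hδ x hx => ?_⟩
    · nlinarith [abs_le_max_abs_abs hx.1 hx.2]
    · have hLx' := abs_sub (L δ x + x) x
      rw [add_sub_cancel_right] at hLx'
      nlinarith [abs_le_max_abs_abs hx.1 hx.2, hLx δ hδ x hx, mul_le_mul_of_nonneg_left hδ.2 hc]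
  obtain ⟨MP, hMP, hP⟩ := exists_abs_le_of_continuous_uncurry
    (F := fun δ s => (s + δ * φₑ s) * (1 + δ * deriv φₑ s) * deriv φₑ s) (by fun_prop) 0 δ₁ (-R) R
  obtain ⟨MQ, hMQ, hQ⟩ := exists_abs_le_of_continuous_uncurry
    (F := fun δ s => (φₑ s + s * deriv φₑ s + δ * φₑ s * deriv φₑ s) * deriv φₑ s) (by fun_prop)
    0 δ₁ (-R) R
  refine ⟨MP * c + MQ * (2 * R) + 1, by positivity, δ₁, hδ₁, le_rfl, fun δ hδ x hx => ?_⟩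
  have hδ0 : 0 ≤ δ := hδ.1
  calc _ ≤ δ * (MP * |L δ x + x| + δ * MQ * (2 * |x|)) :=
        abs_integral_transition_sub_le hφ heven hδ0 (hxR x hx) (hLR δ hδ x hx)
          (hLdef δ hδ x hx).2 (hP δ hδ) (hQ δ hδ)
    _ ≤ δ * (MP * (c * δ) + δ * MQ * (2 * R)) := by
        gcongr
        exacts [hLx δ hδ x hx, hxR x hx]
    _ ≤ (MP * c + MQ * (2 * R) + 1) * δ ^ 2 := by nlinarith [sq_nonneg δ]

/-- First-order expansion in δ of the slow divergence integral of the non-smooth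
center model with transition function φ̃(x) = x + δφₑ(x):
I(x)/4 = ∫ₓ^{L(x)} φ̃(s)(φ̃'(s))² ds = -2δ∫₀ˣ s·φₑ'(s) ds + O(δ²), uniformly on
compact subintervals of (0,1). -/
theorem stmt11 (φₑ : ℝ → ℝ) (p : Polynomial ℝ)
    (hp : ∀ x : ℝ, φₑ x = p.eval x)
    (heven : ∀ x : ℝ, φₑ (-x) = φₑ x) (h0 : φₑ 0 = 0)
    (L : ℝ → ℝ → ℝ) (a b : ℝ) (hab : 0 < a ∧ a ≤ b ∧ b < 1)
    (δ₁ : ℝ) (hδ₁ : 0 < δ₁)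
    (hLdef : ∀ δ ∈ Set.Icc (0 : ℝ) δ₁, ∀ x ∈ Set.Icc a b,
      L δ x < 0 ∧ (L δ x + δ * φₑ (L δ x)) = -(x + δ * φₑ x))
    (hLexp : ∃ C > (0 : ℝ), ∀ δ ∈ Set.Icc (0 : ℝ) δ₁, ∀ x ∈ Set.Icc a b,
      |L δ x - (-x + (-2 * φₑ x) * δ)| ≤ C * δ ^ 2) :
    ∃ C > (0 : ℝ), ∃ δ₀ > (0 : ℝ), δ₀ ≤ δ₁ ∧
      ∀ δ ∈ Set.Icc (0 : ℝ) δ₀, ∀ x ∈ Set.Icc a b,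
        |(∫ s in x..(L δ x),
            (s + δ * φₑ s) * (deriv (fun u => u + δ * φₑ u) s) ^ 2) -
          (-2 * δ * ∫ s in (0:ℝ)..x, s * deriv φₑ s)| ≤ C * δ ^ 2 :=
  stmt11_general φₑ p hp heven L a b δ₁ hδ₁ hLdef hLexp
end
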